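/- Well-definedness of the projective intertwiner: for every P ∈ (0,1) and every (x,y,z) ∈ ℝ³, with A = P/(2−P) one has Ψ₋(x+2, y+P, z+P) − Ψ₊(x,y,z) = (−1,−A,A), and (−1,−A,A) = −(1,−1,−1) − (0,1+A,1−A) ∈ Λ_A; hence the two branches of Ψ agree modulo Λ_A on representatives differing by the plaid lattice vector (2,P,P). -/
import Mathlib


/-- The graph lattice `Λ_A ⊂ ℝ³`. -/
def graphLattice (A : ℝ) : Set (ℝ × ℝ × ℝ) :=
  {v | ∃ c₁ c₂ c₃ : ℤ,
    v = (c₁ : ℝ) • ((1 : ℝ), (-1 : ℝ), (-1 : ℝ)) +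
        (c₂ : ℝ) • ((0 : ℝ), 1 + A, 1 - A) +
        (c₃ : ℝ) • ((0 : ℝ), (0 : ℝ), 1 + A)}

/-- The `(+)` branch of the projective intertwiner. -/
noncomputable def PsiPlus (P : ℝ) (v : ℝ × ℝ × ℝ) : ℝ × ℝ × ℝ :=
  (2 - P)⁻¹ • (v.1 - v.2.1, -v.2.1 - 1, v.2.2 + P + 1) + ((1 : ℝ), (0 : ℝ), (0 : ℝ))

/-- The `(−)` branch of the projective intertwiner. -/
noncomputable def PsiMinus (P : ℝ) (v : ℝ × ℝ × ℝ) : ℝ × ℝ × ℝ :=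
  (2 - P)⁻¹ • (v.1 - v.2.1, -v.2.1 - 1, v.2.2 + P + 1) - ((1 : ℝ), (0 : ℝ), (0 : ℝ))

/-- well-definedness of the projective intertwiner: with `A = P/(2−P)`,
`Ψ₋(x+2, y+P, z+P) − Ψ₊(x,y,z) = (−1,−A,A)`, and
`(−1,−A,A) = −(1,−1,−1) − (0,1+A,1−A) ∈ Λ_A`. -/
theorem stmt13 (P : ℝ) (hP : P ∈ Set.Ioo (0 : ℝ) 1) (x y z : ℝ) :
    PsiMinus P (x + 2, y + P, z + P) - PsiPlus P (x, y, z) =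
        ((-1 : ℝ), -(P / (2 - P)), P / (2 - P)) ∧
    ((-1 : ℝ), -(P / (2 - P)), P / (2 - P)) =
        -((1 : ℝ), (-1 : ℝ), (-1 : ℝ)) -
          ((0 : ℝ), 1 + P / (2 - P), 1 - P / (2 - P)) ∧
    ((-1 : ℝ), -(P / (2 - P)), P / (2 - P)) ∈ graphLattice (P / (2 - P)) := by
  have h2P : (2 : ℝ) - P ≠ 0 := by nlinarith [hP.1, hP.2]
  refine ⟨?_, ?_, ?_⟩
  · simp only [PsiMinus, PsiPlus, Prod.ext_iff, Prod.smul_mk, Prod.mk_add_mk,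
      Prod.mk_sub_mk, smul_eq_mul]
    refine ⟨?_, ?_, ?_⟩ <;> field_simp <;> ring
  · simp only [Prod.ext_iff, Prod.neg_mk, Prod.mk_sub_mk]
    refine ⟨by ring, by ring, by ring⟩
  · refine ⟨-1, -1, 0, ?_⟩
    simp only [Prod.ext_iff, Prod.smul_mk, Prod.mk_add_mk, smul_eq_mul]
    push_cast
    exact ⟨by ring, by ring, by ring⟩
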